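/- arXiv:1403.2176 — 2 statements merged into one kernel-verified Lean document; each statement's English description precedes it below -/
import Mathlib

section
/- Let N ≥ 3, p ∈ (1, (N+2)/(N-2)], λ ≥ 0, and let u be a solution of -Δu - uΔ(|u|²) - λu - |u|^{p-1}u = 0 satisfying the Pohozaev identity ((N-2)/N)(½‖∇u‖₂² + ∫|u|²|∇u|²) - (λ/2)‖u‖₂² = (1/(p+1))‖u‖_{p+1}^{p+1} and the Nehari identity ‖∇u‖₂² + 4∫|u|²|∇u|² - λ‖u‖₂² - ‖u‖_{p+1}^{p+1} = 0. Then u ≡ 0. -/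
/-!
Eliminating `∫ |u|^(p+1)` between the Pohozaev and Nehari identities gives
`λ N (p-1) ‖u‖₂² = ((N-2)p - (N+2)) ‖∇u‖₂² + 2((N-2)p - (3N+2)) ∫ u² |∇u|²`.
For `p ≤ (N+2)/(N-2)` the right side is a nonpositive combination with strictly negative
second coefficient, so `∫ u² |∇u|² = 0`. As `∇u` vanishes almost everywhere on `{u = 0}`
(at a Lebesgue density point of a level set the tangent cone is the whole space), this forces
`∇u = 0` a.e.; the Nehari identity then reads `∫ |u|^(p+1) = -λ ‖u‖₂² ≤ 0`.
-/

open MeasureTheory Set Filter Metric Topology Pointwise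

section LevelSets

variable {E F : Type*} [NormedAddCommGroup E] [NormedSpace ℝ E] [FiniteDimensional ℝ E]
  [MeasurableSpace E] [BorelSpace E] (μ : Measure E) [μ.IsAddHaarMeasure]
  [NormedAddCommGroup F] [NormedSpace ℝ F]

theorem tangentConeAt_eq_univ_of_density_one {s : Set E} {x : E}
    (h : Tendsto (fun r => μ (s ∩ closedBall x r) / μ (closedBall x r)) (𝓝[>] 0) (𝓝 1)) :
    tangentConeAt ℝ s x = univ := by
  refine eq_univ_of_forall fun y => ?_
  simp only [tangentConeAt_eq_biInter_closure, mem_iInter₂]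
  intro U hU
  refine Metric.mem_closure_iff.2 fun ε hε => ?_
  obtain ⟨r, ⟨_, hs, hball⟩, hU', hr⟩ : ∃ r : ℝ, (s ∩ ({x} + r • closedBall y (ε / 2))).Nonempty ∧
      {0} + r • closedBall y (ε / 2) ⊆ U ∧ 0 < r :=
    ((Measure.eventually_nonempty_inter_smul_of_density_one μ s x h _ measurableSet_closedBall
      (measure_closedBall_pos μ y (half_pos hε)).ne').and
      (((eventually_singleton_add_smul_subset isBounded_closedBall hU).filter_mono
        nhdsWithin_le_nhds).and self_mem_nhdsWithin)).exists
  obtain ⟨a, ha, rfl⟩ : ∃ a ∈ closedBall y (ε / 2), x + r • a = _ := by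
    simpa only [singleton_add, image_image, mem_image, mem_smul_set, exists_exists_and_eq_and]
      using hball
  refine ⟨a, mem_smul.2 ⟨r⁻¹, mem_univ _, r • a, ⟨hU' ?_, hs⟩, inv_smul_smul₀ hr.ne' a⟩, ?_⟩
  · simpa only [singleton_add, zero_add, image_id'] using smul_mem_smul_set ha
  · rw [dist_comm]
    exact (mem_closedBall.1 ha).trans_lt (half_lt_self hε)

theorem uniqueDiffWithinAt_of_density_one {s : Set E} {x : E}
    (h : Tendsto (fun r => μ (s ∩ closedBall x r) / μ (closedBall x r)) (𝓝[>] 0) (𝓝 1)) :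
    UniqueDiffWithinAt ℝ s x := by
  have hcone := tangentConeAt_eq_univ_of_density_one μ h
  refine ⟨?_, mem_closure_of_nonempty_tangentConeAt (hcone ▸ univ_nonempty)⟩
  simp [hcone]

theorem ae_fderiv_eq_zero_of_eq (u : E → F) (c : F) :
    ∀ᵐ x ∂μ, u x = c → fderiv ℝ u x = 0 := by
  filter_upwards [ae_imp_of_ae_restrict (Besicovitch.ae_tendsto_measure_inter_div μ {x | u x = c})]
    with x hdensity hxc
  by_cases hdiff : DifferentiableAt ℝ u x
  · have hconst : HasFDerivWithinAt u (0 : E →L[ℝ] F) {x | u x = c} x :=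
      (hasFDerivWithinAt_const c x _).congr (fun y hy => hy) hxc
    exact (uniqueDiffWithinAt_of_density_one μ (hdensity hxc)).eq
      hdiff.hasFDerivAt.hasFDerivWithinAt hconst
  · exact fderiv_zero_of_not_differentiableAt hdiff

theorem ae_fderiv_eq_zero_of_integral_sq_mul_eq_zero (u : E → ℝ)
    (hint : Integrable (fun x => u x ^ 2 * ‖fderiv ℝ u x‖ ^ 2) μ)
    (h : ∫ x, u x ^ 2 * ‖fderiv ℝ u x‖ ^ 2 ∂μ = 0) :
    ∀ᵐ x ∂μ, fderiv ℝ u x = 0 := by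
  filter_upwards [(integral_eq_zero_iff_of_nonneg (fun x => by positivity) hint).1 h,
    ae_fderiv_eq_zero_of_eq μ u 0] with x hprod hlevel
  rcases mul_eq_zero.1 hprod with hu | hDu
  · exact hlevel (pow_eq_zero_iff two_ne_zero |>.1 hu)
  · exact norm_eq_zero.1 (pow_eq_zero_iff two_ne_zero |>.1 hDu)

end LevelSets

theorem ae_eq_zero_of_integral_abs_rpow_eq_zero {α : Type*} [MeasurableSpace α] {μ : Measure α}
    {u : α → ℝ} {q : ℝ} (hint : Integrable (fun x => |u x| ^ q) μ)
    (h : ∫ x, |u x| ^ q ∂μ = 0) :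
    u =ᵐ[μ] 0 := by
  filter_upwards [(integral_eq_zero_iff_of_nonneg (fun x => by positivity) hint).1 h] with x hx
  exact abs_eq_zero.1 ((Real.rpow_eq_zero_iff_of_nonneg (abs_nonneg _)).1 hx).1

theorem pohozaev_nehari_combination {N p lam A B L P : ℝ} (hN : 0 < N) (hp : p + 1 ≠ 0)
    (hPoho : (N - 2) / N * ((1 / 2) * A + B) - lam / 2 * L = 1 / (p + 1) * P)
    (hNehari : A + 4 * B - lam * L - P = 0) :
    lam * L * (N * (p - 1)) =
      ((N - 2) * p - (N + 2)) * A + 2 * ((N - 2) * p - (3 * N + 2)) * B := by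
  field_simp at hPoho
  linear_combination (-1) * hPoho + 2 * N * hNehari

theorem weighted_gradient_term_eq_zero_of_pohozaev_nehari {N p lam A B L P : ℝ} (hN : 2 < N)
    (hp1 : 1 ≤ p) (hp2 : p ≤ (N + 2) / (N - 2)) (hlam : 0 ≤ lam)
    (hA : 0 ≤ A) (hB : 0 ≤ B) (hL : 0 ≤ L)
    (hPoho : (N - 2) / N * ((1 / 2) * A + B) - lam / 2 * L = 1 / (p + 1) * P)
    (hNehari : A + 4 * B - lam * L - P = 0) :
    B = 0 := by
  have hcomb := pohozaev_nehari_combination (by linarith) (by linarith) hPoho hNehari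
  have hsub : p * (N - 2) ≤ N + 2 := (le_div_iff₀ (by linarith)).1 hp2
  have hlamL : 0 ≤ lam * L * (N * (p - 1)) := by
    have : 0 ≤ p - 1 := by linarith
    positivity
  have hA' : ((N - 2) * p - (N + 2)) * A ≤ 0 := mul_nonpos_of_nonpos_of_nonneg (by linarith) hA
  have hB' : 0 ≤ ((N - 2) * p - (3 * N + 2)) * B := by linarith
  exact le_antisymm (nonpos_of_mul_nonneg_right hB' (by linarith)) hB

theorem stmt0_general (N : ℕ) (hN : 3 ≤ N) (p lam : ℝ) (hp1 : 1 < p)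
    (hp2 : p ≤ ((N : ℝ) + 2) / ((N : ℝ) - 2)) (hlam : 0 ≤ lam)
    (u : EuclideanSpace ℝ (Fin N) → ℝ)
    (hV : Integrable (fun x => (u x) ^ 2 * ‖fderiv ℝ u x‖ ^ 2))
    (hP : Integrable (fun x => |u x| ^ (p + 1)))
    (hPoho : (((N : ℝ) - 2) / N) *
        ((1 / 2) * (∫ x, ‖fderiv ℝ u x‖ ^ 2) + ∫ x, (u x) ^ 2 * ‖fderiv ℝ u x‖ ^ 2)
        - (lam / 2) * (∫ x, (u x) ^ 2)
        = (1 / (p + 1)) * ∫ x, |u x| ^ (p + 1))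
    (hNehari : (∫ x, ‖fderiv ℝ u x‖ ^ 2)
        + 4 * (∫ x, (u x) ^ 2 * ‖fderiv ℝ u x‖ ^ 2)
        - lam * (∫ x, (u x) ^ 2) - (∫ x, |u x| ^ (p + 1)) = 0) :
    u =ᵐ[volume] 0 := by
  have hN' : (2 : ℝ) < N := by
    have : (3 : ℝ) ≤ N := by exact_mod_cast hN
    linarith
  have hL : 0 ≤ ∫ x, u x ^ 2 := integral_nonneg fun x => by positivity
  have hB : ∫ x, u x ^ 2 * ‖fderiv ℝ u x‖ ^ 2 = 0 :=
    weighted_gradient_term_eq_zero_of_pohozaev_nehari hN' hp1.le hp2 hlam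
      (integral_nonneg fun x => by positivity) (integral_nonneg fun x => by positivity) hL
      hPoho hNehari
  have hA : ∫ x, ‖fderiv ℝ u x‖ ^ 2 = 0 := by
    refine integral_eq_zero_of_ae ?_
    filter_upwards [ae_fderiv_eq_zero_of_integral_sq_mul_eq_zero volume u hV hB] with x hx
    simp [hx]
  have hPnonneg : 0 ≤ ∫ x, |u x| ^ (p + 1) := integral_nonneg fun x => by positivity
  have hPzero : ∫ x, |u x| ^ (p + 1) = 0 := by
    rw [hA, hB] at hNehari
    linarith [mul_nonneg hlam hL]
  exact ae_eq_zero_of_integral_abs_rpow_eq_zero hP hPzero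

/-- Non-existence (Liouville-type) result: if `λ ≥ 0`, `1 < p ≤ (N+2)/(N-2)`, `N ≥ 3`,
and `u` satisfies the Pohozaev and Nehari identities for the quasilinear equation,
then `u ≡ 0`. -/
theorem stmt0 (N : ℕ) (hN : 3 ≤ N) (p lam : ℝ) (hp1 : 1 < p)
    (hp2 : p ≤ ((N : ℝ) + 2) / ((N : ℝ) - 2)) (hlam : 0 ≤ lam)
    (u : EuclideanSpace ℝ (Fin N) → ℝ)
    (hL2 : Integrable (fun x => (u x) ^ 2))
    (hG : Integrable (fun x => ‖fderiv ℝ u x‖ ^ 2))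
    (hV : Integrable (fun x => (u x) ^ 2 * ‖fderiv ℝ u x‖ ^ 2))
    (hP : Integrable (fun x => |u x| ^ (p + 1)))
    (hPoho : (((N : ℝ) - 2) / N) *
        ((1 / 2) * (∫ x, ‖fderiv ℝ u x‖ ^ 2) + ∫ x, (u x) ^ 2 * ‖fderiv ℝ u x‖ ^ 2)
        - (lam / 2) * (∫ x, (u x) ^ 2)
        = (1 / (p + 1)) * ∫ x, |u x| ^ (p + 1))
    (hNehari : (∫ x, ‖fderiv ℝ u x‖ ^ 2)
        + 4 * (∫ x, (u x) ^ 2 * ‖fderiv ℝ u x‖ ^ 2)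
        - lam * (∫ x, (u x) ^ 2) - (∫ x, |u x| ^ (p + 1)) = 0) :
    u =ᵐ[volume] 0 :=
  stmt0_general N hN p lam hp1 hp2 hlam u hV hP hPoho hNehari
end

section
/- Giaquinta-type iteration lemma: let A: [0,∞) → [0,∞) be non-increasing with A(r) → 0 as r → ∞, and suppose there is C > 0 such that A(R) ≤ ((r/R)^{N-2} + C·A(r)^{2/(N-2)})·A(r) for all R ≥ r > 0, with N ≥ 3. Then for every q ∈ ((N-2)²/N, N-2) there exists C' > 0 such that A(r) ≤ C'·r^{-q} for all r > 0. -/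
open Filter

/-- Giaquinta-type iteration lemma: a non-increasing `A ≥ 0` with `A(r) → 0` satisfying
`A(R) ≤ ((r/R)^{N-2} + C A(r)^{2/(N-2)}) A(r)` for `R ≥ r > 0` decays like `r^{-q}`
for every `q ∈ ((N-2)²/N, N-2)`. -/
theorem stmt17 (N : ℕ) (hN : 3 ≤ N) (A : ℝ → ℝ)
    (hnonneg : ∀ r : ℝ, 0 ≤ r → 0 ≤ A r)
    (hmono : ∀ r s : ℝ, 0 ≤ r → r ≤ s → A s ≤ A r)
    (hlim : Tendsto A atTop (nhds 0))
    (C : ℝ) (hC : 0 < C)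
    (hiter : ∀ r R : ℝ, 0 < r → r ≤ R →
      A R ≤ ((r / R) ^ ((N : ℝ) - 2) + C * (A r) ^ (2 / ((N : ℝ) - 2))) * A r) :
    ∀ q : ℝ, ((N : ℝ) - 2) ^ 2 / N < q → q < (N : ℝ) - 2 →
      ∃ C' > (0 : ℝ), ∀ r > (0 : ℝ), A r ≤ C' * r ^ (-q) := by
  intro q hq1 hq2
  set n : ℝ := (N : ℝ) - 2 with hn_def
  have hNpos : (0 : ℝ) < N := by positivity
  have hn1 : (1 : ℝ) ≤ n := by
    have : (3 : ℝ) ≤ N := by exact_mod_cast hN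
    simp only [hn_def]; linarith
  have hn0 : (0 : ℝ) < n := lt_of_lt_of_le one_pos hn1
  have hq0 : 0 < q := lt_trans (div_pos (pow_pos hn0 2) hNpos) hq1
  have hnq : 0 < n - q := by linarith
  -- θ = 2 ^ (1/(n-q))
  set θ : ℝ := (2 : ℝ) ^ (n - q)⁻¹ with hθ_def
  have hθ1 : 1 < θ := by
    rw [hθ_def, Real.one_lt_rpow_iff_of_pos (by norm_num)]
    exact Or.inl ⟨one_lt_two, inv_pos.mpr hnq⟩
  have hθ0 : (0 : ℝ) < θ := lt_trans one_pos hθ1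
  have hθnq : θ ^ (n - q) = 2 := by
    rw [hθ_def, ← Real.rpow_mul (by norm_num : (0:ℝ) ≤ 2),
      inv_mul_cancel₀ (ne_of_gt hnq), Real.rpow_one]
  -- key: 2 * θ^(-n) = θ^(-q)
  have hkey : 2 * θ ^ (-n) = θ ^ (-q) := by
    rw [← hθnq, ← Real.rpow_add hθ0]
    ring_nf
  have hθn_pos : (0 : ℝ) < θ ^ (-n) := Real.rpow_pos_of_pos hθ0 _
  -- choose r₀ with A r₀ small
  set ε : ℝ := (θ ^ (-n) / C) ^ (n / 2) with hε_def
  have hε0 : 0 < ε := Real.rpow_pos_of_pos (div_pos hθn_pos hC) _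
  have hεkey : C * ε ^ (2 / n) = θ ^ (-n) := by
    rw [hε_def, ← Real.rpow_mul (le_of_lt (div_pos hθn_pos hC))]
    rw [show n / 2 * (2 / n) = 1 by field_simp, Real.rpow_one]
    field_simp
  have hev : ∀ᶠ r in atTop, A r < ε := hlim.eventually (eventually_lt_nhds hε0)
  obtain ⟨r₁, hr₁⟩ := eventually_atTop.mp hev
  set r₀ : ℝ := max r₁ 1 with hr₀_def
  have hr₀1 : (1 : ℝ) ≤ r₀ := le_max_right _ _
  have hr₀0 : (0 : ℝ) < r₀ := lt_of_lt_of_le one_pos hr₀1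
  have hAr₀ : A r₀ < ε := hr₁ r₀ (le_max_left _ _)
  have hsmall : C * (A r₀) ^ (2 / n) ≤ θ ^ (-n) := by
    rw [← hεkey]
    exact mul_le_mul_of_nonneg_left
      (Real.rpow_le_rpow (hnonneg r₀ hr₀0.le) hAr₀.le (by positivity)) hC.le
  -- the iteration
  have hAq_nonneg : (0 : ℝ) ≤ θ ^ (-q) := (Real.rpow_pos_of_pos hθ0 _).le
  have claim : ∀ k : ℕ, A (θ ^ k * r₀) ≤ θ ^ (-(q * k)) * A r₀ := by
    intro k
    induction k with
    | zero => simp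
    | succ k ih =>
      have hθk1 : (1 : ℝ) ≤ θ ^ k := one_le_pow₀ hθ1.le
      have hrpos : 0 < θ ^ k * r₀ := by positivity
      have hr0le : r₀ ≤ θ ^ k * r₀ := le_mul_of_one_le_left hr₀0.le hθk1
      have hle : θ ^ k * r₀ ≤ θ ^ (k + 1) * r₀ := by
        apply mul_le_mul_of_nonneg_right _ hr₀0.le
        exact pow_le_pow_right₀ hθ1.le (Nat.le_succ k)
      have h1 := hiter (θ ^ k * r₀) (θ ^ (k + 1) * r₀) hrpos hle
      have hdiv : (θ ^ k * r₀) / (θ ^ (k + 1) * r₀) = θ⁻¹ := by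
        rw [pow_succ]
        field_simp
      have hdivpow : ((θ ^ k * r₀) / (θ ^ (k + 1) * r₀)) ^ ((N : ℝ) - 2) = θ ^ (-n) := by
        rw [hdiv, ← hn_def, Real.rpow_neg hθ0.le, Real.inv_rpow hθ0.le]
      have hArk : A (θ ^ k * r₀) ≤ A r₀ := hmono r₀ _ hr₀0.le hr0le
      have hArk0 : 0 ≤ A (θ ^ k * r₀) := hnonneg _ hrpos.le
      have hsmall' : C * (A (θ ^ k * r₀)) ^ (2 / ((N : ℝ) - 2)) ≤ θ ^ (-n) := by
        refine le_trans ?_ hsmall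
        rw [← hn_def]
        exact mul_le_mul_of_nonneg_left
          (Real.rpow_le_rpow hArk0 hArk (by positivity)) hC.le
      have h2 : A (θ ^ (k + 1) * r₀) ≤ (2 * θ ^ (-n)) * A (θ ^ k * r₀) := by
        refine h1.trans (mul_le_mul_of_nonneg_right ?_ hArk0)
        rw [hdivpow]; linarith
      rw [hkey] at h2
      calc A (θ ^ (k + 1) * r₀) ≤ θ ^ (-q) * A (θ ^ k * r₀) := h2
        _ ≤ θ ^ (-q) * (θ ^ (-(q * k)) * A r₀) :=
            mul_le_mul_of_nonneg_left ih hAq_nonneg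
        _ = θ ^ (-(q * ((k + 1 : ℕ) : ℝ))) * A r₀ := by
            have he : -q + -(q * (k : ℝ)) = -(q * ((k + 1 : ℕ) : ℝ)) := by
              push_cast; ring
            rw [← mul_assoc, ← Real.rpow_add hθ0, he]
  -- interpolation for r ≥ r₀
  have hbound : ∀ r : ℝ, r₀ ≤ r → A r ≤ (θ ^ q * A r₀ * r₀ ^ q) * r ^ (-q) := by
    intro r hr
    have hrpos : 0 < r := lt_of_lt_of_le hr₀0 hr
    have hratio1 : (1 : ℝ) ≤ r / r₀ := (one_le_div hr₀0).mpr hr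
    obtain ⟨m, hm⟩ := pow_unbounded_of_one_lt (r / r₀) hθ1
    have hS : ∃ m : ℕ, r / r₀ < θ ^ m := ⟨m, hm⟩
    set m₀ := Nat.find hS with hm₀_def
    have hm₀spec : r / r₀ < θ ^ m₀ := Nat.find_spec hS
    have hm₀ne : m₀ ≠ 0 := by
      intro h
      rw [h, pow_zero] at hm₀spec
      linarith
    obtain ⟨k, hk⟩ : ∃ k, m₀ = k + 1 := ⟨m₀ - 1, (Nat.succ_pred_eq_of_pos (Nat.pos_of_ne_zero hm₀ne)).symm⟩
    have hklow : θ ^ k ≤ r / r₀ := by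
      by_contra h
      exact Nat.find_min hS (by omega : k < m₀) (lt_of_not_ge h)
    have hkup : r / r₀ < θ ^ (k + 1) := hk ▸ hm₀spec
    have h1 : A r ≤ A (θ ^ k * r₀) := by
      apply hmono _ _ (by positivity)
      rwa [← le_div_iff₀ hr₀0]
    have h2 := claim k
    -- θ^(-(q k)) = θ^q * ((θ^(k+1) : ℝ)) ^ (-q)
    have h3 : (θ : ℝ) ^ (-(q * k)) = θ ^ q * ((θ ^ (k + 1) : ℝ)) ^ (-q) := by
      rw [← Real.rpow_natCast θ (k + 1), ← Real.rpow_mul hθ0.le, ← Real.rpow_add hθ0]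
      push_cast
      ring_nf
    have h4 : ((θ ^ (k + 1) : ℝ)) ^ (-q) ≤ (r / r₀) ^ (-q) := by
      apply Real.rpow_le_rpow_of_nonpos (by positivity) hkup.le (by linarith)
    have h5 : (r / r₀) ^ (-q) = r₀ ^ q * r ^ (-q) := by
      rw [Real.div_rpow hrpos.le hr₀0.le, Real.rpow_neg hrpos.le, Real.rpow_neg hr₀0.le]
      field_simp
    calc A r ≤ θ ^ (-(q * k)) * A r₀ := h1.trans h2
      _ = θ ^ q * ((θ ^ (k + 1) : ℝ)) ^ (-q) * A r₀ := by rw [h3]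
      _ ≤ θ ^ q * ((r / r₀) ^ (-q)) * A r₀ := by
          apply mul_le_mul_of_nonneg_right _ (hnonneg r₀ hr₀0.le)
          exact mul_le_mul_of_nonneg_left h4 (Real.rpow_pos_of_pos hθ0 _).le
      _ = (θ ^ q * A r₀ * r₀ ^ q) * r ^ (-q) := by rw [h5]; ring
  -- assemble the constant
  refine ⟨max 1 ((θ ^ q * A r₀ + A 0) * r₀ ^ q), lt_of_lt_of_le one_pos (le_max_left _ _), ?_⟩
  intro r hr
  have hrq : (0 : ℝ) < r ^ (-q) := Real.rpow_pos_of_pos hr _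
  have hA0 : 0 ≤ A 0 := hnonneg 0 le_rfl
  have hAr₀0 : 0 ≤ A r₀ := hnonneg r₀ hr₀0.le
  have hθq : 0 ≤ θ ^ q := (Real.rpow_pos_of_pos hθ0 _).le
  have hr₀q : (1 : ℝ) ≤ r₀ ^ q := Real.one_le_rpow hr₀1 hq0.le
  have hmain : A r ≤ (θ ^ q * A r₀ + A 0) * r₀ ^ q * r ^ (-q) := by
    rcases le_or_gt r₀ r with h | h
    · refine (hbound r h).trans ?_
      have : θ ^ q * A r₀ * r₀ ^ q ≤ (θ ^ q * A r₀ + A 0) * r₀ ^ q := by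
        apply mul_le_mul_of_nonneg_right _ (by linarith)
        linarith
      exact mul_le_mul_of_nonneg_right this hrq.le
    · have h1 : A r ≤ A 0 := hmono 0 r le_rfl hr.le
      have h2 : (1 : ℝ) ≤ r₀ ^ q * r ^ (-q) := by
        have hdiv : (1 : ℝ) ≤ (r₀ / r) ^ q :=
          Real.one_le_rpow ((one_le_div hr).mpr h.le) hq0.le
        rwa [Real.div_rpow hr₀0.le hr.le, div_eq_mul_inv,
          ← Real.rpow_neg hr.le] at hdiv
      calc A r ≤ A 0 := h1
        _ ≤ A 0 * (r₀ ^ q * r ^ (-q)) := le_mul_of_one_le_right hA0 h2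
        _ ≤ (θ ^ q * A r₀ + A 0) * r₀ ^ q * r ^ (-q) := by
            rw [mul_assoc]
            apply mul_le_mul_of_nonneg_right _ (by positivity)
            nlinarith
  refine hmain.trans (mul_le_mul_of_nonneg_right (le_max_right _ _) hrq.le)
end
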